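/- arXiv:1904.08604 — 4 statements merged into one kernel-verified Lean document; each statement's English description precedes it below -/
import Mathlib

section
/- Let K be a complete discrete valuation field whose residue field F has characteristic p > 0, and let k = ⋂_{r ≥ 0} F^{p^r} be the largest perfect subfield of F. Then the subring A = ⋂_{r ≥ 0} (O_K/pO_K)^{p^r} of O_K/pO_K maps bijectively onto k under the reduction map O_K/pO_K → F; equivalently, A equals the image of k under the canonical ring homomorphism W(k) → O_K → O_K/pO_K from the ring of Witt vectors. In particular, if K has characteristic p (so that O_K/pO_K = O_K), then ⋂_{r ≥ 0} (O_K)^{p^r} = k. -/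
open IsLocalRing Multiplicative

/-!
Let `S = 𝒪_K/p`, `f : S → F` the reduction map, and choose an ideal `I ≤ ker f` such that `S` is
`I`-adically complete and `c ^ p ^ N ∈ I` for all `c ∈ ker f`: if `p = 0` in `𝒪_K` take
`I = ker f` and `N = 0`; otherwise take `I = 0`, since `p ∣ c ^ p ^ N` for every `c ∈ m_K` as
soon as `p ^ N ≥ v(p)`. Then `f a = f b` forces
`a ^ p ^ (N + n) - b ^ p ^ (N + n) = ((a - b) ^ p ^ N) ^ p ^ n ∈ I ^ n`. As `F` is reduced this
gives injectivity on `⋂ S^{pʳ}`; and if `t = sᵣ ^ p ^ r` lies in `⋂ F^{pʳ}` and `uᵣ` lifts `sᵣ`,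
the sequence `uᵣ ^ p ^ r` converges to an element of `⋂ S^{pʳ}` lifting `t`.
-/

def perfectCore (M : Type*) [Monoid M] (p : ℕ) : Set M :=
  {x | ∀ r : ℕ, ∃ y, y ^ p ^ r = x}

theorem mapsTo_perfectCore {M N F : Type*} [Monoid M] [Monoid N] [FunLike F M N]
    [MonoidHomClass F M N] (f : F) (p : ℕ) :
    Set.MapsTo f (perfectCore M p) (perfectCore N p) := by
  intro x hx r
  obtain ⟨y, rfl⟩ := hx r
  exact ⟨f y, (map_pow f y _).symm⟩

theorem pow_prime_pow_injective {T : Type*} [CommRing T] [IsReduced T] (p : ℕ) [Fact p.Prime]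
    [CharP T p] (r : ℕ) : Function.Injective fun y : T ↦ y ^ p ^ r :=
  iterateFrobenius_inj T p r

theorem IsHausdorff.eq_of_forall_sub_mem_pow {S : Type*} [CommRing S] (I : Ideal S)
    [IsHausdorff I S] {x y : S} (h : ∀ n, x - y ∈ I ^ n) : x = y :=
  sub_eq_zero.mp <| IsHausdorff.haus ‹_› _ fun n ↦ by
    rw [SModEq.zero, smul_eq_mul, Ideal.mul_top]
    exact h n

theorem IsPrecomplete.exists_forall_sub_mem_pow {S : Type*} [CommRing S] {I : Ideal S}
    [IsPrecomplete I S] (a : ℕ → S) (ha : ∀ {m n}, m ≤ n → a n - a m ∈ I ^ m) :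
    ∃ L, ∀ n, a n - L ∈ I ^ n := by
  obtain ⟨L, hL⟩ := IsPrecomplete.prec ‹_› fun {m n} hmn ↦ by
    rw [SModEq.sub_mem, smul_eq_mul, Ideal.mul_top, ← neg_sub]
    exact neg_mem (ha hmn)
  refine ⟨L, fun n ↦ ?_⟩
  simpa [SModEq.sub_mem, smul_eq_mul, Ideal.mul_top] using hL n

theorem isAdicComplete_map_mk_of_eq_bot {R : Type*} [CommRing R] {P : Ideal R} (hP : P = ⊥)
    (J : Ideal R) [IsAdicComplete J R] : IsAdicComplete (J.map (Ideal.Quotient.mk P)) (R ⧸ P) :=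
  (IsAdicComplete.congr_ringEquiv J (RingEquiv.ofBijective (Ideal.Quotient.mk P)
    ((Ideal.Quotient.mk_bijective_iff_eq_bot P).mpr hP))).mpr ‹_›

open scoped WithZero in
theorem Valuation.exists_forall_dvd_pow_of_mem_maximalIdeal {K : Type*} [Field K]
    (v : Valuation K ℤᵐ⁰) {a : v.valuationSubring} (ha : a ≠ 0) :
    ∃ n, ∀ c ∈ maximalIdeal v.valuationSubring, a ∣ c ^ n := by
  obtain ⟨n, hn⟩ := WithZero.exists_exp_neg_natCast_lt (x := v a)
    (by simpa [Valuation.ne_zero_iff] using ha)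
  refine ⟨n, fun c hc ↦ (valuationSubring.integers v).dvd_of_le ?_⟩
  have hc_le : v c ≤ WithZero.exp (-1) := by
    rw [mem_maximalIdeal_iff] at hc
    rw [← WithZero.lt_mul_exp_iff_le WithZero.exp_ne_zero, ← WithZero.exp_add, neg_add_cancel,
      WithZero.exp_zero]
    exact hc
  calc v (c ^ n : v.valuationSubring) = v c ^ n := by simp
    _ ≤ WithZero.exp (-1) ^ n := pow_le_pow_left₀ zero_le hc_le n
    _ = WithZero.exp (-(n : ℤ)) := by rw [← WithZero.exp_nsmul, nsmul_eq_mul, mul_neg_one]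
    _ ≤ v a := hn.le

section PerfectCore

variable {S T : Type*} [CommRing S] [CommRing T] {p : ℕ} [Fact p.Prime] [CharP S p]
  {f : S →+* T} {I : Ideal S} {N : ℕ}

theorem pow_sub_pow_mem_of_map_eq (hN : ∀ c ∈ RingHom.ker f, c ^ p ^ N ∈ I) {a b : S}
    (h : f a = f b) (n : ℕ) : a ^ p ^ (N + n) - b ^ p ^ (N + n) ∈ I ^ n := by
  rw [← sub_pow_char_pow, pow_add, pow_mul]
  exact Ideal.pow_le_pow_right (Nat.lt_pow_self (Fact.out : p.Prime).one_lt).le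
    (Ideal.pow_mem_pow (hN _ (RingHom.sub_mem_ker_iff f |>.mpr h)) _)

theorem exists_forall_pow_sub_mem_pow_of_compatible [IsPrecomplete I S]
    (hN : ∀ c ∈ RingHom.ker f, c ^ p ^ N ∈ I) (u : ℕ → S)
    (hu : ∀ m k, f (u (m + k)) ^ p ^ k = f (u m)) :
    ∃ L, ∀ n, u (N + n) ^ p ^ (N + n) - L ∈ I ^ n := by
  refine IsPrecomplete.exists_forall_sub_mem_pow _ fun {m n} hmn ↦ ?_
  obtain ⟨k, rfl⟩ := Nat.exists_eq_add_of_le hmn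
  have h := pow_sub_pow_mem_of_map_eq hN (a := u (N + m + k) ^ p ^ k) (b := u (N + m))
    (by rw [map_pow, hu]) m
  rw [← pow_mul, ← pow_add, add_comm k] at h
  rwa [← add_assoc]

variable [CharP T p] [IsReduced T]

theorem injOn_perfectCore [IsHausdorff I S] (hN : ∀ c ∈ RingHom.ker f, c ^ p ^ N ∈ I) :
    Set.InjOn f (perfectCore S p) := by
  intro x hx x' hx' h
  refine IsHausdorff.eq_of_forall_sub_mem_pow I fun n ↦ ?_
  obtain ⟨y, rfl⟩ := hx (N + n)
  obtain ⟨y', rfl⟩ := hx' (N + n)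
  refine pow_sub_pow_mem_of_map_eq hN (pow_prime_pow_injective p (N + n) ?_) n
  simpa only [map_pow] using h

theorem surjOn_perfectCore [IsAdicComplete I S] (hf : Function.Surjective f)
    (hI : I ≤ RingHom.ker f) (hN : ∀ c ∈ RingHom.ker f, c ^ p ^ N ∈ I) :
    Set.SurjOn f (perfectCore S p) (perfectCore T p) := by
  intro t ht
  choose s hs using ht
  choose u hu using fun r ↦ hf (s r)
  have compatible : ∀ m k, f (u (m + k)) ^ p ^ k = f (u m) := by
    intro m k
    refine pow_prime_pow_injective p m ?_
    simp only [hu, ← pow_mul, ← pow_add, add_comm k, hs]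
  obtain ⟨L, hL⟩ := exists_forall_pow_sub_mem_pow_of_compatible hN u compatible
  refine ⟨L, fun r ↦ ?_, ?_⟩
  · -- the limit `W` built from the shifted system `u (· + r)` is a `p ^ r`-th root of `L`
    obtain ⟨W, hW⟩ := exists_forall_pow_sub_mem_pow_of_compatible hN (fun n ↦ u (n + r))
      fun m k ↦ by simpa only [add_right_comm] using compatible (m + r) k
    refine ⟨W, IsHausdorff.eq_of_forall_sub_mem_pow I fun n ↦ ?_⟩
    have hWr : (u (N + n + r) ^ p ^ (N + n) - W) ^ p ^ r ∈ I ^ n :=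
      Ideal.pow_mem_of_mem _ (hW n) _ (pow_pos (Fact.out : p.Prime).pos r)
    have hLr : u (N + (n + r)) ^ p ^ (N + (n + r)) - L ∈ I ^ n :=
      Ideal.pow_le_pow_right (Nat.le_add_right n r) (hL (n + r))
    rw [sub_pow_char_pow, ← pow_mul, ← pow_add] at hWr
    rw [← add_assoc] at hLr
    simpa only [sub_sub_sub_cancel_left] using sub_mem hLr hWr
  · have h1 := hI (pow_one I ▸ hL 1)
    rw [RingHom.sub_mem_ker_iff, map_pow, hu, hs] at h1
    exact h1.symm

theorem bijOn_perfectCore [IsAdicComplete I S] (hf : Function.Surjective f)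
    (hI : I ≤ RingHom.ker f) (hN : ∀ c ∈ RingHom.ker f, c ^ p ^ N ∈ I) :
    Set.BijOn f (perfectCore S p) (perfectCore T p) :=
  ⟨mapsTo_perfectCore f p, injOn_perfectCore hN, surjOn_perfectCore hf hI hN⟩

end PerfectCore

theorem inter_pow_frobenius_bijOn_general
    (K : Type*) [Field K] (vK : Valuation K (WithZero (Multiplicative ℤ)))
    (hcompl : IsAdicComplete (maximalIdeal vK.valuationSubring) vK.valuationSubring)
    (p : ℕ) (hp : p.Prime)
    (hres : CharP (ResidueField vK.valuationSubring) p)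
    (hpm : (p : vK.valuationSubring) ∈ maximalIdeal vK.valuationSubring) :
    Set.BijOn
      (Ideal.Quotient.factor (S := Ideal.span {(p : vK.valuationSubring)})
        (T := maximalIdeal vK.valuationSubring)
        (Ideal.span_le.mpr (Set.singleton_subset_iff.mpr hpm)))
      {x : vK.valuationSubring ⧸ Ideal.span {(p : vK.valuationSubring)} |
        ∀ r : ℕ, ∃ y, y ^ p ^ r = x}
      {x : ResidueField vK.valuationSubring | ∀ r : ℕ, ∃ y, y ^ p ^ r = x} := by
  have := Fact.mk hp
  have : CharP (vK.valuationSubring ⧸ maximalIdeal vK.valuationSubring) p := hres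
  have := CharP.quotient vK.valuationSubring p ((mem_maximalIdeal _).mp hpm)
  have hle := Ideal.span_le.mpr (Set.singleton_subset_iff.mpr hpm)
  have hker := Ideal.Quotient.factor_ker hle
  by_cases hp0 : (p : vK.valuationSubring) = 0
  · have : IsAdicComplete (RingHom.ker (Ideal.Quotient.factor hle)) _ := hker ▸
      isAdicComplete_map_mk_of_eq_bot (by rw [hp0, Ideal.span_singleton_eq_bot]) _
    exact bijOn_perfectCore (N := 0) (Ideal.Quotient.factor_surjective hle) le_rfl (by simp)
  · obtain ⟨n, hn⟩ := vK.exists_forall_dvd_pow_of_mem_maximalIdeal hp0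
    refine bijOn_perfectCore (I := ⊥) (N := n) (Ideal.Quotient.factor_surjective hle) bot_le
      fun c hc ↦ ?_
    obtain ⟨a, ha, rfl⟩ := (Ideal.mem_map_iff_of_surjective _ Ideal.Quotient.mk_surjective).mp
      (hker ▸ hc)
    rw [Ideal.mem_bot, ← map_pow, Ideal.Quotient.eq_zero_iff_mem, Ideal.mem_span_singleton]
    exact (hn a ha).trans (pow_dvd_pow a (Nat.lt_pow_self hp.one_lt).le)

/-- Lemma 2.2: Let `K` be a complete discrete valuation field whose residue field `F`
has characteristic `p > 0`, and let `k = ⋂ F^{pʳ}` be the largest perfect subfield of `F`.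
Then the subring `A = ⋂ (𝒪_K/p𝒪_K)^{pʳ}` of `𝒪_K/p𝒪_K` maps bijectively onto `k` under the
reduction map `𝒪_K/p𝒪_K → F`. -/
theorem inter_pow_frobenius_bijOn
    (K : Type*) [Field K] (vK : Valuation K (WithZero (Multiplicative ℤ)))
    (hsurj : Function.Surjective vK)
    (hcompl : IsAdicComplete (maximalIdeal vK.valuationSubring) vK.valuationSubring)
    (p : ℕ) (hp : p.Prime)
    (hres : CharP (ResidueField vK.valuationSubring) p)
    (hpm : (p : vK.valuationSubring) ∈ maximalIdeal vK.valuationSubring) :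
    Set.BijOn
      (Ideal.Quotient.factor (S := Ideal.span {(p : vK.valuationSubring)})
        (T := maximalIdeal vK.valuationSubring)
        (Ideal.span_le.mpr (Set.singleton_subset_iff.mpr hpm)))
      {x : vK.valuationSubring ⧸ Ideal.span {(p : vK.valuationSubring)} |
        ∀ r : ℕ, ∃ y, y ^ p ^ r = x}
      {x : ResidueField vK.valuationSubring | ∀ r : ℕ, ∃ y, y ^ p ^ r = x} :=
  inter_pow_frobenius_bijOn_general K vK hcompl p hp hres hpm
end

section
/- Let K be a complete discrete valuation field of characteristic p > 0 with residue field F and prime element π, and let L = K(α) be an Artin–Schreier extension where α^p − α = f ∈ K. Suppose f ∈ u·π^{−mp} + π^{−mp+1}·O_K for some integer m ≥ 1 and some u ∈ O_K whose residue class ū does not belong to F^p. Then the residue field E of L equals F(ū^{1/p}) and e(L/K) = 1. -/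
/-!
Put `T = α π ^ m`. Multiplying `α ^ p - α = f` by `π ^ (m p)` gives
`T ^ p - π ^ (m (p - 1)) T = u + π c`, so `T` is a unit of `𝒪_L` whose residue `β` satisfies
`β ^ p = ū`. As `ū` is not a `p`-th power, `1, β, …, β ^ (p - 1)` are linearly independent
over `F`, so the valuation of `∑ bᵢ Tⁱ` is the largest `vK (bᵢ) ^ e`: no cancellation can
happen after dividing by the coefficient of largest valuation. The powers `Tⁱ`, `i < p`, span
`L` over `K`. Hence every value of `vL` is an `e`-th power of a value of `vK`, which forces
`e = 1`, and every element of `𝒪_L` is an `𝒪_K`-combination of the `Tⁱ`, so its residue lies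
in `F(β)`.
-/

noncomputable section

open IsLocalRing Multiplicative

local notation "ℤₘ₀" => WithZero (Multiplicative ℤ)

variable {K L : Type*} [Field K] [Field L] [Algebra K L]

/-- The ring homomorphism between valuation rings induced by an extension of valued fields
whose ramification index is `e`. -/
def VIntHom (vK : Valuation K ℤₘ₀) (vL : Valuation L ℤₘ₀) (e : ℕ)
    (h : ∀ x : K, vL (algebraMap K L x) = vK x ^ e) :
    vK.valuationSubring →+* vL.valuationSubring :=
  RingHom.codRestrict ((algebraMap K L).comp vK.valuationSubring.subtype)
    vL.valuationSubring.toSubring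
    (fun x => by
      have hx : vK (x : K) ≤ 1 := x.2
      show vL (algebraMap K L (x : K)) ≤ 1
      rw [h]
      exact pow_le_one' hx e)

theorem VIntHom_isLocalHom (vK : Valuation K ℤₘ₀) (vL : Valuation L ℤₘ₀) (e : ℕ) (he : 0 < e)
    (h : ∀ x : K, vL (algebraMap K L x) = vK x ^ e) :
    IsLocalHom (VIntHom vK vL e h) := by
  constructor
  intro a ha
  obtain ⟨u, hu⟩ := ha
  have hx : vL ((u : vL.valuationSubring) : L) ≤ 1 := (u : vL.valuationSubring).2
  have hx' : vL (((u⁻¹ : _) : vL.valuationSubring) : L) ≤ 1 := ((u⁻¹ : _) : vL.valuationSubring).2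
  have hmul : ((u : vL.valuationSubring) : L) * (((u⁻¹ : _) : vL.valuationSubring) : L) = 1 := by
    rw [← Subring.coe_mul]
    norm_cast
    simp
  have h1 : vL ((u : vL.valuationSubring) : L) = 1 := by
    refine le_antisymm hx ?_
    have hh := map_mul vL ((u : vL.valuationSubring) : L) (((u⁻¹ : _) : vL.valuationSubring) : L)
    rw [hmul, map_one] at hh
    calc (1 : ℤₘ₀) = vL ((u : vL.valuationSubring) : L) * vL (((u⁻¹ : _) : vL.valuationSubring) : L) := hh
      _ ≤ vL ((u : vL.valuationSubring) : L) * 1 := mul_le_mul_right hx' _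
      _ = vL ((u : vL.valuationSubring) : L) := mul_one _
  have h2 : vL (algebraMap K L (a : K)) = 1 := by
    rw [hu] at h1
    exact h1
  have hKa : vK (a : K) = 1 := by
    rw [h] at h2
    by_contra hne
    have hlt : vK (a : K) < 1 := lt_of_le_of_ne a.2 hne
    have : vK (a : K) ^ e < 1 := pow_lt_one' hlt he.ne'
    rw [h2] at this
    exact lt_irrefl _ this
  have hne : (a : K) ≠ 0 := by
    intro h0
    rw [h0, map_zero] at hKa
    exact zero_ne_one hKa
  refine IsUnit.of_mul_eq_one (a := a) ⟨(a : K)⁻¹, ?_⟩ (Subtype.ext ?_)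
  · show vK (a : K)⁻¹ ≤ 1
    rw [map_inv₀, hKa, inv_one]
  · show ((a : K) * (a : K)⁻¹ : K) = 1
    exact mul_inv_cancel₀ hne

/-- The induced homomorphism between residue fields of an extension of valued fields. -/
def ResHom (vK : Valuation K ℤₘ₀) (vL : Valuation L ℤₘ₀) (e : ℕ) (he : 0 < e)
    (h : ∀ x : K, vL (algebraMap K L x) = vK x ^ e) :
    ResidueField vK.valuationSubring →+* ResidueField vL.valuationSubring :=
  haveI : IsLocalHom (VIntHom vK vL e h) := VIntHom_isLocalHom vK vL e he h
  IsLocalRing.ResidueField.map (VIntHom vK vL e h)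

open Polynomial

lemma WithZero.eq_one_of_pow_eq_exp_neg_one {x : ℤₘ₀} {e : ℕ} (h : x ^ e = exp (-1 : ℤ)) :
    e = 1 := by
  lift x to ℤ using (by rintro rfl; cases e <;> simp [eq_comm (a := (0 : ℤₘ₀))] at h)
  rw [← exp_nsmul, exp_inj, nsmul_eq_mul] at h
  rcases Int.eq_one_or_neg_one_of_mul_eq_neg_one h with h1 | h1 <;> omega

namespace Valuation

variable {R Γ₀ : Type*} [Ring R] [LinearOrderedCommGroupWithZero Γ₀] (v : Valuation R Γ₀)

lemma map_eq_one_of_pow_sub_mul_eq {p : ℕ} (hp : 1 < p) {x a w : R} (ha : v a ≤ 1)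
    (hw : v w = 1) (h : x ^ p - a * x = w) : v x = 1 := by
  have hax : v (a * x) ≤ v x := by
    rw [map_mul]; exact mul_le_of_le_one_left' ha
  rcases lt_trichotomy (v x) 1 with hlt | heq | hgt
  · have hpow : v (x ^ p) < 1 := by
      rw [map_pow]; exact pow_lt_one₀ zero_le hlt (by omega)
    refine absurd hw (ne_of_lt ?_)
    rw [← h]
    exact (v.map_sub _ _).trans_lt (max_lt hpow (hax.trans_lt hlt))
  · exact heq
  · have hpow : v x < v (x ^ p) := by
      rw [map_pow]; exact lt_self_pow₀ hgt hp
    refine absurd hw (ne_of_gt ?_)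
    rw [← h, v.map_sub_eq_of_lt_left (hax.trans_lt hpow)]
    exact hgt.trans hpow

end Valuation

lemma linearIndependent_pow_of_pow_eq_algebraMap {F E : Type*} [Field F] [Field E] [Algebra F E]
    {p : ℕ} (hp : p.Prime) {a : F} (ha : ∀ b : F, b ^ p ≠ a) {β : E}
    (hβ : β ^ p = algebraMap F E a) : LinearIndependent F fun i : Fin p => β ^ (i : ℕ) := by
  have hroot : aeval β (X ^ p - C a) = 0 := by simp [hβ]
  have hminpoly : minpoly F β = X ^ p - C a :=
    (minpoly.eq_of_irreducible_of_monic (X_pow_sub_C_irreducible_of_prime hp ha) hroot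
      (monic_X_pow_sub_C a hp.ne_zero)).symm
  have h := linearIndependent_pow (K := F) β
  rwa [hminpoly, natDegree_X_pow_sub_C] at h

lemma exists_eq_sum_smul_pow_of_monic {x : L} (hgen : IntermediateField.adjoin K {x} = ⊤)
    {Q : K[X]} (hQ : Q.Monic) (hx : aeval x Q = 0) {n : ℕ} (hn : Q.natDegree ≤ n) (y : L) :
    ∃ b : Fin n → K, y = ∑ i, b i • x ^ (i : ℕ) := by
  have hy : y ∈ Algebra.adjoin K {x} := by
    rw [← IntermediateField.adjoin_simple_toSubalgebra_of_isAlgebraic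
      ⟨Q, hQ.ne_zero, hx⟩, hgen]
    trivial
  rw [Algebra.adjoin_singleton_eq_range_aeval] at hy
  obtain ⟨q, rfl⟩ := (AlgHom.mem_range _).mp hy
  have hQ1 : Q ≠ 1 := by rintro rfl; simp at hx
  refine ⟨fun i => (q %ₘ Q).coeff i, ?_⟩
  rw [← aeval_modByMonic_eq_self_of_root hx,
    aeval_eq_sum_range' ((natDegree_modByMonic_lt q hQ hQ1).trans_le hn)]
  exact (Fin.sum_univ_eq_sum_range (fun i => (q %ₘ Q).coeff i • x ^ i) n).symm

lemma exists_eq_sum_smul_pow_of_pow_sub_mul_eq {x : L} (hgen : IntermediateField.adjoin K {x} = ⊤)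
    {p : ℕ} (hp : 1 < p) {a w : K} (h : x ^ p - algebraMap K L a * x = algebraMap K L w)
    (y : L) : ∃ b : Fin p → K, y = ∑ i, b i • x ^ (i : ℕ) := by
  refine exists_eq_sum_smul_pow_of_monic hgen (Q := X ^ p - (C a * X + C w))
    (monic_X_pow_sub (degree_linear_le.trans_lt (by exact_mod_cast hp))) ?_
    ((natDegree_sub_le _ _).trans (max_le (natDegree_X_pow_le p) (natDegree_linear_le.trans hp.le)))
    y
  simp only [map_sub, map_add, map_mul, map_pow, aeval_X, aeval_C, ← h]
  ring

lemma mul_algebraMap_pow_sub_mul_eq {p : ℕ} (hp : p ≠ 0) {α : L} {f : K}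
    (hα : α ^ p - α = algebraMap K L f) (c : K) :
    (α * algebraMap K L c) ^ p - algebraMap K L (c ^ (p - 1)) * (α * algebraMap K L c) =
      algebraMap K L (f * c ^ p) := by
  obtain ⟨q, rfl⟩ := Nat.exists_eq_add_one_of_ne_zero hp
  rw [Nat.add_sub_cancel, map_mul, ← hα, map_pow, map_pow]
  ring

lemma IntermediateField.adjoin_simple_mul_algebraMap_eq_top {x : L}
    (hgen : IntermediateField.adjoin K {x} = ⊤) {c : K} (hc : c ≠ 0) :
    IntermediateField.adjoin K {x * algebraMap K L c} = ⊤ := by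
  refine top_le_iff.mp (hgen ▸ adjoin_simple_le_iff.mpr ?_)
  convert mul_mem (mem_adjoin_simple_self K (x * algebraMap K L c)) (algebraMap_mem _ c⁻¹)
    using 1
  rw [mul_assoc, ← map_mul, mul_inv_cancel₀ hc, map_one, mul_one]

section ResidueExtension

variable (vK : Valuation K ℤₘ₀) (vL : Valuation L ℤₘ₀) {e : ℕ} (he : 0 < e)
  (hcomp : ∀ x : K, vL (algebraMap K L x) = vK x ^ e)

lemma residue_VIntHom (x : vK.valuationSubring) :
    residue _ (VIntHom vK vL e hcomp x) = ResHom vK vL e he hcomp (residue _ x) :=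
  haveI := VIntHom_isLocalHom vK vL e he hcomp
  (ResidueField.map_residue _ x).symm

lemma coe_VIntHom (x : vK.valuationSubring) :
    (VIntHom vK vL e hcomp x : L) = algebraMap K L x :=
  rfl

lemma coe_sum_VIntHom_mul_pow {n : ℕ} (a : Fin n → vK.valuationSubring)
    (τ : vL.valuationSubring) :
    ((∑ i, VIntHom vK vL e hcomp (a i) * τ ^ (i : ℕ) : vL.valuationSubring) : L) =
      ∑ i, (a i : K) • (τ : L) ^ (i : ℕ) := by
  push_cast
  simp only [Algebra.smul_def]
  rfl

lemma residue_pow_eq_of_pow_sub_mul_eq {p : ℕ}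
    {τ : vL.valuationSubring} {a w : vK.valuationSubring} (ha : vK a < 1)
    (h : (τ : L) ^ p - algebraMap K L a * τ = algebraMap K L w) :
    residue _ τ ^ p = ResHom vK vL e he hcomp (residue _ w) := by
  have hsub : τ ^ p - VIntHom vK vL e hcomp w = VIntHom vK vL e hcomp a * τ :=
    Subtype.ext (by push_cast [coe_VIntHom]; linear_combination h)
  have hmem : VIntHom vK vL e hcomp a * τ ∈ maximalIdeal _ := by
    refine Ideal.mul_mem_right _ _ ((vL.mem_maximalIdeal_iff).mpr ?_)
    exact (hcomp a).trans_lt (pow_lt_one₀ zero_le ha he.ne')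
  rw [← residue_VIntHom vK vL he hcomp, ← map_pow, ← sub_eq_zero, ← map_sub, hsub,
    residue_eq_zero_iff]
  exact hmem

section

variable {n : ℕ} {τ : vL.valuationSubring}
  (hind : ∀ r : Fin n → ResidueField vK.valuationSubring,
    ∑ i, ResHom vK vL e he hcomp (r i) * residue _ τ ^ (i : ℕ) = 0 → ∀ i, r i = 0)
include hind

lemma valuation_sum_smul_pow_eq_one {a : Fin n → vK.valuationSubring}
    (ha : ∃ j, residue _ (a j) ≠ 0) : vL (∑ i, (a i : K) • (τ : L) ^ (i : ℕ)) = 1 := by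
  rw [← coe_sum_VIntHom_mul_pow vK vL hcomp]
  refine (Valuation.valuationSubring.integers vL).one_of_isUnit ?_
  rw [← residue_ne_zero_iff_isUnit, map_sum]
  simp only [map_mul, map_pow, residue_VIntHom vK vL he hcomp]
  obtain ⟨j, hj⟩ := ha
  exact fun h0 => hj (hind _ h0 j)

lemma valuation_sum_smul_pow (b : Fin n → K) {j : Fin n} (hj : ∀ i, vK (b i) ≤ vK (b j)) :
    vL (∑ i, b i • (τ : L) ^ (i : ℕ)) = vK (b j) ^ e := by
  by_cases hbj : b j = 0
  · have hb : ∀ i, b i = 0 := fun i => by simpa [hbj] using hj i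
    simp [hb, he.ne']
  set a : Fin n → vK.valuationSubring := fun i =>
    ⟨b i / b j, by
      rw [Valuation.mem_valuationSubring_iff, map_div₀, div_le_one₀ (vK.pos_iff.mpr hbj)]
      exact hj i⟩
  have hsum :
      ∑ i, b i • (τ : L) ^ (i : ℕ) = b j • ∑ i, (a i : K) • (τ : L) ^ (i : ℕ) := by
    simp only [Finset.smul_sum, smul_smul, a, mul_div_cancel₀ _ hbj]
  have haj : residue _ (a j) ≠ 0 := by
    have : a j = 1 := Subtype.ext (div_self hbj)
    simp [this]
  rw [hsum, Algebra.smul_def, map_mul, hcomp,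
    valuation_sum_smul_pow_eq_one vK vL he hcomp hind ⟨j, haj⟩, mul_one]

variable [NeZero n]
  (hspan : ∀ y : L, ∃ b : Fin n → K, y = ∑ i, b i • (τ : L) ^ (i : ℕ))
include hspan

lemma exists_valuation_eq_pow (y : L) : ∃ x : K, vL y = vK x ^ e := by
  obtain ⟨b, rfl⟩ := hspan y
  obtain ⟨j, hj⟩ := Finite.exists_max fun i => vK (b i)
  exact ⟨b j, valuation_sum_smul_pow vK vL he hcomp hind b hj⟩

lemma exists_residue_eq_sum (w : vL.valuationSubring) :
    ∃ r : Fin n → ResidueField vK.valuationSubring,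
      residue _ w = ∑ i, ResHom vK vL e he hcomp (r i) * residue _ τ ^ (i : ℕ) := by
  obtain ⟨b, hb⟩ := hspan w
  obtain ⟨j, hj⟩ := Finite.exists_max fun i => vK (b i)
  have hbj : vK (b j) ≤ 1 := by
    rw [← pow_le_one_iff he.ne', ← valuation_sum_smul_pow vK vL he hcomp hind b hj, ← hb]
    exact w.2
  set a : Fin n → vK.valuationSubring := fun i => ⟨b i, (hj i).trans hbj⟩
  have hw : w = ∑ i, VIntHom vK vL e hcomp (a i) * τ ^ (i : ℕ) :=
    Subtype.ext (hb.trans (coe_sum_VIntHom_mul_pow vK vL hcomp a τ).symm)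
  refine ⟨fun i => residue _ (a i), ?_⟩
  simp only [hw, map_sum, map_mul, map_pow, residue_VIntHom vK vL he hcomp]

lemma closure_range_ResHom_union_eq_top :
    Subfield.closure (Set.range (ResHom vK vL e he hcomp) ∪ {residue _ τ}) = ⊤ := by
  refine eq_top_iff.mpr fun ξ _ => ?_
  obtain ⟨w, rfl⟩ := residue_surjective ξ
  obtain ⟨r, hr⟩ := exists_residue_eq_sum vK vL he hcomp hind hspan w
  rw [hr]
  refine Subfield.sum_mem _ fun i _ => Subfield.mul_mem _ ?_ (Subfield.pow_mem _ ?_ _)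
  · exact Subfield.subset_closure (Or.inl ⟨r i, rfl⟩)
  · exact Subfield.subset_closure (Or.inr rfl)

end

lemma residue_generator_and_valuation_eq_pow_of_pow_sub_mul_eq {p : ℕ} (hp : p.Prime)
    {a w : vK.valuationSubring} (ha : vK a < 1)
    (hw : ¬ ∃ y : ResidueField vK.valuationSubring, y ^ p = residue _ w) {T : L}
    (hgen : IntermediateField.adjoin K {T} = ⊤)
    (hT : T ^ p - algebraMap K L a * T = algebraMap K L w) :
    (∃ β : ResidueField vL.valuationSubring, β ^ p = ResHom vK vL e he hcomp (residue _ w) ∧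
        Subfield.closure (Set.range (ResHom vK vL e he hcomp) ∪ {β}) = ⊤) ∧
      ∀ y : L, ∃ x : K, vL y = vK x ^ e := by
  have hw0 : residue _ w ≠ 0 := fun h0 => hw ⟨0, by rw [h0, zero_pow hp.ne_zero]⟩
  have hw1 : vK w = 1 := (Valuation.valuationSubring.integers vK).one_of_isUnit
    ((residue_ne_zero_iff_isUnit _).mp hw0)
  have hTval : vL T = 1 := vL.map_eq_one_of_pow_sub_mul_eq hp.one_lt
    (by rw [hcomp]; exact pow_le_one' ha.le e)
    (by rw [hcomp, hw1, one_pow]) hT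
  set τ : vL.valuationSubring := ⟨T, hTval.le⟩
  have hβ : residue _ τ ^ p = ResHom vK vL e he hcomp (residue _ w) :=
    residue_pow_eq_of_pow_sub_mul_eq vK vL he hcomp ha hT
  have hind : ∀ r : Fin p → ResidueField vK.valuationSubring,
      ∑ i, ResHom vK vL e he hcomp (r i) * residue _ τ ^ (i : ℕ) = 0 → ∀ i, r i = 0 := by
    let := (ResHom vK vL e he hcomp).toAlgebra
    exact Fintype.linearIndependent_iff.mp
      (linearIndependent_pow_of_pow_eq_algebraMap hp (fun b hb => hw ⟨b, hb⟩) hβ)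
  have hspan : ∀ y : L, ∃ b : Fin p → K, y = ∑ i, b i • (τ : L) ^ (i : ℕ) :=
    exists_eq_sum_smul_pow_of_pow_sub_mul_eq hgen hp.one_lt hT
  have : NeZero p := ⟨hp.ne_zero⟩
  exact ⟨⟨_, hβ, closure_range_ResHom_union_eq_top vK vL he hcomp hind hspan⟩,
    exists_valuation_eq_pow vK vL he hcomp hind hspan⟩

end ResidueExtension

theorem artinSchreier_ferocious_general
    (p : ℕ) (hp : p.Prime)
    (K : Type*) [Field K] (vK : Valuation K ℤₘ₀)
    (L : Type*) [Field L] [Algebra K L] (vL : Valuation L ℤₘ₀)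
    (hsurjL : Function.Surjective vL)
    (e : ℕ) (he : 0 < e) (hcomp : ∀ x : K, vL (algebraMap K L x) = vK x ^ e)
    (π : K) (hπ : vK π = ((ofAdd (-1 : ℤ) : Multiplicative ℤ) : ℤₘ₀))
    (m : ℕ) (hm : 1 ≤ m)
    (u : vK.valuationSubring)
    (hu : ¬ ∃ y : ResidueField vK.valuationSubring,
      y ^ p = residue vK.valuationSubring u)
    (f : K)
    (hf : ∃ c : K, vK c ≤ 1 ∧
      f = (u : K) * π ^ (-(m * p : ℤ)) + π ^ (-(m * p : ℤ) + 1) * c)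
    (α : L) (hα : α ^ p - α = algebraMap K L f)
    (hgen : IntermediateField.adjoin K {α} = ⊤) :
    (∃ β : ResidueField vL.valuationSubring,
        β ^ p = ResHom vK vL e he hcomp (residue vK.valuationSubring u) ∧
        Subfield.closure (Set.range (ResHom vK vL e he hcomp) ∪ {β}) = ⊤) ∧
      e = 1 := by
  obtain ⟨c, hc, rfl⟩ := hf
  have hπ1 : vK π < 1 := by
    rw [hπ, ← WithZero.exp_zero]
    exact WithZero.exp_lt_exp.mpr (by norm_num)
  have hπ0 : π ≠ 0 := by rintro rfl; simp at hπ
  set ϖ : vK.valuationSubring := ⟨π, hπ1.le⟩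
  set w := u + ϖ * ⟨c, hc⟩
  have hres : residue _ w = residue _ u := by
    have hϖ : residue _ ϖ = 0 := (residue_eq_zero_iff _).mpr ((vK.mem_maximalIdeal_iff).mpr hπ1)
    simp [w, hϖ]
  have hfπ : (u * π ^ (-(m * p : ℤ)) + π ^ (-(m * p : ℤ) + 1) * c) * (π ^ m) ^ p = w := by
    rw [← pow_mul, zpow_add_one₀ hπ0, zpow_neg, ← Nat.cast_mul, zpow_natCast]
    field_simp
    rfl
  have ha : vK ((ϖ ^ m) ^ (p - 1) : vK.valuationSubring) < 1 := by
    simp only [SubmonoidClass.coe_pow, map_pow, ← pow_mul]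
    exact pow_lt_one₀ zero_le hπ1 (Nat.mul_ne_zero (by omega) (by have := hp.two_le; omega))
  obtain ⟨⟨β, hβ, hclosure⟩, hval⟩ :=
    residue_generator_and_valuation_eq_pow_of_pow_sub_mul_eq vK vL he hcomp hp ha (hres ▸ hu)
      (IntermediateField.adjoin_simple_mul_algebraMap_eq_top hgen (pow_ne_zero m hπ0))
      (hfπ ▸ mul_algebraMap_pow_sub_mul_eq hp.ne_zero hα (π ^ m))
  refine ⟨⟨β, hres ▸ hβ, hclosure⟩, ?_⟩
  obtain ⟨y, hy⟩ := hsurjL (WithZero.exp (-1))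
  obtain ⟨x, hx⟩ := hval y
  exact WithZero.eq_one_of_pow_eq_exp_neg_one (hx ▸ hy)

/-- Lemma 2.3 (3): Let `K` be a complete discrete valuation field of characteristic `p > 0`
with prime element `π`, and `L = K(α)` the Artin–Schreier extension given by
`α ^ p - α = f` with `f ∈ u π^{-mp} + π^{-mp+1} 𝒪_K`, where `m ≥ 1` and `u ∈ 𝒪_K` has
residue class `ū ∉ F^p`.  Then the residue field of `L` equals `F(ū^{1/p})` and `e(L/K) = 1`. -/
theorem artinSchreier_ferocious
    (p : ℕ) (hp : p.Prime)
    (K : Type*) [Field K] [CharP K p] (vK : Valuation K ℤₘ₀)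
    (hsurjK : Function.Surjective vK)
    (hcompl : IsAdicComplete (maximalIdeal vK.valuationSubring) vK.valuationSubring)
    (L : Type*) [Field L] [Algebra K L] (vL : Valuation L ℤₘ₀)
    (hsurjL : Function.Surjective vL)
    (e : ℕ) (he : 0 < e) (hcomp : ∀ x : K, vL (algebraMap K L x) = vK x ^ e)
    (π : K) (hπ : vK π = ((ofAdd (-1 : ℤ) : Multiplicative ℤ) : ℤₘ₀))
    (m : ℕ) (hm : 1 ≤ m)
    (u : vK.valuationSubring)
    (hu : ¬ ∃ y : ResidueField vK.valuationSubring,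
      y ^ p = residue vK.valuationSubring u)
    (f : K)
    (hf : ∃ c : K, vK c ≤ 1 ∧
      f = (u : K) * π ^ (-(m * p : ℤ)) + π ^ (-(m * p : ℤ) + 1) * c)
    (α : L) (hα : α ^ p - α = algebraMap K L f)
    (hgen : IntermediateField.adjoin K {α} = ⊤) :
    (∃ β : ResidueField vL.valuationSubring,
        β ^ p = ResHom vK vL e he hcomp (residue vK.valuationSubring u) ∧
        Subfield.closure (Set.range (ResHom vK vL e he hcomp) ∪ {β}) = ⊤) ∧
      e = 1 :=
  artinSchreier_ferocious_general p hp K vK L vL hsurjL e he hcomp π hπ m hm u hu f hf α hα hgen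
end
end

section
/- Let K be a complete discrete valuation field of mixed characteristic (0, p) containing a primitive p-th root of unity ζ_p, with residue field F and prime element π. Let L = K(α) be a Kummer extension with α^p = a ∈ K^×. Suppose a ∈ (1 + π^n·u)·(1 + π^{n+1}·O_K) for some integer n not divisible by p with 1 ≤ n < e_K·p/(p − 1) and some u ∈ O_K^×. Then e(L/K) = p and the residue field E of L equals F. -/
noncomputable section

open IsLocalRing Multiplicative

notation "ℤₘ₀" => WithZero (Multiplicative ℤ)

variable {K L : Type*} [Field K] [Field L] [Algebra K L]

/-! Put `x = α - 1`, so that `a - 1 = (1 + x)^p - 1`. In the binomial expansion the middle terms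
are divisible by `p`, and the bound `n (p - 1) < e_K p` forces `ord_L (x^p) = ord_L (a - 1) = e n`.
As `p ∤ n` this gives `p ∣ e`, while `e ≤ [L : K] ≤ p`; hence `e = p` and `ord_L x = n` is prime
to `p`. Then `1, x, …, x^(p-1)` is a `K`-basis of `L` whose terms `c_i x^i` have valuations in
distinct classes modulo `p ℤ`, so the valuation of `∑ c_i x^i` is the largest one of its terms;
consequently an integral element of `L` is integral in each coordinate, and congruent to its
constant coordinate modulo the maximal ideal. -/

open WithZero

namespace Valuation

variable {R Γ₀ : Type*} [CommRing R] [LinearOrderedCommGroupWithZero Γ₀] (v : Valuation R Γ₀)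

theorem map_natCast_le_one (n : ℕ) : v n ≤ 1 := by
  have h := (n : v.integer).2
  rwa [mem_integer_iff, SubringClass.coe_natCast] at h

theorem map_le_map_sum_of_injOn {ι : Type*} {s : Finset ι} {f : ι → R}
    (hf : ∀ i ∈ s, ∀ j ∈ s, v (f i) = v (f j) → v (f i) ≠ 0 → i = j) {i : ι} (hi : i ∈ s) :
    v (f i) ≤ v (∑ j ∈ s, f j) := by
  classical
  obtain ⟨j, hj, hmax⟩ := s.exists_max_image (fun k => v (f k)) ⟨i, hi⟩
  rcases eq_or_ne (v (f j)) 0 with h0 | h0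
  · exact (hmax i hi).trans (h0 ▸ zero_le)
  rw [v.map_sum_eq_of_lt hj fun k hk => ?_]
  · exact hmax i hi
  obtain ⟨hks, hkj⟩ := Finset.mem_sdiff.mp hk
  exact (hmax k hks).lt_of_ne fun h => hkj (Finset.mem_singleton.mpr (hf k hks j hj h (h ▸ h0)))

theorem map_sub_one_of_eq_one_add_pow_mul {π u c a : R} (hπ : v π < 1) (hu : v u = 1)
    (hc : v c ≤ 1) {n : ℕ} (ha : a = (1 + π ^ n * u) * (1 + π ^ (n + 1) * c)) :
    v (a - 1) = v π ^ n := by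
  have hrest : v (π * (c + π ^ n * u * c)) < 1 := by
    rw [map_mul]
    refine mul_lt_one_of_lt_of_le hπ (v.map_add_le hc ?_)
    rw [map_mul, map_mul, map_pow, hu, mul_one]
    exact mul_le_one' (pow_le_one' hπ.le n) hc
  have hfactor : a - 1 = π ^ n * (u + π * (c + π ^ n * u * c)) := by rw [ha]; ring
  rw [hfactor, map_mul, map_pow, v.map_add_eq_of_lt_left (hu ▸ hrest), hu, mul_one]

theorem map_pow_eq_map_add_one_pow_sub_one {p : ℕ} (hp : p.Prime) {x : R} (hx : v x ≤ 1)
    (hlt : v p ^ p < v ((x + 1) ^ p - 1) ^ (p - 1)) :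
    v x ^ p = v ((x + 1) ^ p - 1) := by
  set S := ∑ k ∈ Finset.Ioo 0 p, x ^ (k - 1) * 1 ^ (p - k - 1) * ((p.choose k / p : ℕ) : R)
  have hexp : (x + 1) ^ p - 1 = x ^ p + p * x * S := by
    rw [add_pow_prime_eq hp x 1]; ring
  have hS : v S ≤ 1 := v.map_sum_le fun k _ => by
    rw [map_mul, map_mul, one_pow, map_one, mul_one, map_pow]
    exact mul_le_one' (pow_le_one' hx _) (v.map_natCast_le_one _)
  have hmid : v (p * x * S) ≤ v p * v x := by
    rw [map_mul, map_mul]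
    exact mul_le_of_le_one_right' hS
  by_contra hne
  have hle : v (x ^ p) ≤ v (p * x * S) := by
    by_contra! h
    exact hne (by rw [hexp, v.map_add_eq_of_lt_left h, map_pow])
  have hsub : v ((x + 1) ^ p - 1) ≤ v p * v x := hexp ▸ v.map_add_le (hle.trans hmid) hmid
  have hxp : v x ^ (p - 1) ≤ v p := by
    rcases eq_or_ne (v x) 0 with h0 | h0
    · rw [h0, zero_pow (by have := hp.two_le; omega)]
      exact zero_le
    · refine le_of_mul_le_mul_right (a := v x) ?_ (zero_lt_iff.mpr h0)
      rw [← pow_succ, Nat.sub_add_cancel hp.one_le, ← map_pow]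
      exact hle.trans hmid
  refine hlt.not_ge ?_
  calc v ((x + 1) ^ p - 1) ^ (p - 1) ≤ (v p * v x) ^ (p - 1) := pow_le_pow_left' hsub _
    _ = v p ^ (p - 1) * v x ^ (p - 1) := mul_pow _ _ _
    _ ≤ v p ^ (p - 1) * v p := mul_le_mul_right hxp _
    _ = v p ^ p := pow_sub_one_mul hp.ne_zero _

end Valuation

theorem WithZero.eq_and_eq_exp_of_pow_eq_exp_pow {X : ℤᵐ⁰} {p e : ℕ} {k : ℤ} (hp : p.Prime)
    (hk : ¬ (p : ℤ) ∣ k) (he : 0 < e) (hep : e ≤ p) (h : X ^ p = exp k ^ e) :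
    e = p ∧ X = exp k := by
  have hX : X ≠ 0 := fun hX => by
    rw [hX, zero_pow hp.ne_zero] at h
    exact (pow_ne_zero e exp_ne_zero) h.symm
  rw [← exp_log hX, ← exp_nsmul, ← exp_nsmul, exp_inj, nsmul_eq_mul, nsmul_eq_mul] at h
  have hpe : p ∣ e := by
    have hdvd : (p : ℤ) ∣ e * k := ⟨log X, h.symm⟩
    exact Int.natCast_dvd_natCast.mp ((Nat.prime_iff_prime_int.mp hp).dvd_or_dvd hdvd
      |>.resolve_right hk)
  obtain rfl := le_antisymm hep (Nat.le_of_dvd he hpe)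
  exact ⟨rfl, by rw [← exp_log hX, mul_left_cancel₀ (by exact_mod_cast hp.ne_zero) h]⟩

section ValuationExtension

variable {vK : Valuation K ℤₘ₀} {vL : Valuation L ℤₘ₀} {e : ℕ} {w : L} {m : ℤ}

theorem exists_valuation_algebraMap_mul_pow (hcomp : ∀ x : K, vL (algebraMap K L x) = vK x ^ e)
    (hw : vL w = exp m) {c : K} (hc : c ≠ 0) (i : ℕ) :
    ∃ τ : ℤ, vL (algebraMap K L c * w ^ i) = exp (e * τ + i * m) := by
  refine ⟨log (vK c), ?_⟩
  rw [map_mul, hcomp, map_pow, hw, ← exp_log ((map_ne_zero vK).mpr hc), log_exp, exp_add,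
    ← exp_nsmul, ← exp_nsmul, nsmul_eq_mul, nsmul_eq_mul]

theorem valuation_algebraMap_mul_pow_ne (hcomp : ∀ x : K, vL (algebraMap K L x) = vK x ^ e)
    (hw : vL w = exp m) (hm : IsCoprime (e : ℤ) m) {i j : ℕ} (hi : i < e) (hj : j < e)
    (hij : i ≠ j) {c : K} (hc : c ≠ 0) (d : K) :
    vL (algebraMap K L c * w ^ i) ≠ vL (algebraMap K L d * w ^ j) := by
  obtain ⟨τ, hτ⟩ := exists_valuation_algebraMap_mul_pow hcomp hw hc i
  rcases eq_or_ne d 0 with rfl | hd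
  · simp [hτ]
  obtain ⟨τ', hτ'⟩ := exists_valuation_algebraMap_mul_pow hcomp hw hd j
  rw [hτ, hτ', ne_eq, exp_inj]
  intro h
  have hdvd : (e : ℤ) ∣ (i - j : ℤ) := hm.dvd_of_dvd_mul_right ⟨τ' - τ, by linarith⟩
  have := Int.eq_zero_of_abs_lt_dvd hdvd (abs_sub_lt_iff.mpr ⟨by omega, by omega⟩)
  omega

theorem valuation_algebraMap_mul_pow_le_sum
    (hcomp : ∀ x : K, vL (algebraMap K L x) = vK x ^ e) (hw : vL w = exp m)
    (hm : IsCoprime (e : ℤ) m) (g : Fin e → K) (i : Fin e) :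
    vL (algebraMap K L (g i) * w ^ (i : ℕ)) ≤ vL (∑ j, algebraMap K L (g j) * w ^ (j : ℕ)) := by
  refine vL.map_le_map_sum_of_injOn (f := fun j => algebraMap K L (g j) * w ^ (j : ℕ))
    (fun i _ j _ h h0 => ?_) (Finset.mem_univ i)
  by_contra hij
  have hgi : g i ≠ 0 := by rintro hgi; simp [hgi] at h0
  exact valuation_algebraMap_mul_pow_ne hcomp hw hm i.2 j.2 (Fin.val_ne_of_ne hij) hgi _ h

theorem linearIndependent_pow_of_valuation_eq_exp
    (hcomp : ∀ x : K, vL (algebraMap K L x) = vK x ^ e) (hw : vL w = exp m)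
    (hm : IsCoprime (e : ℤ) m) :
    LinearIndependent K (fun i : Fin e => w ^ (i : ℕ)) := by
  rw [Fintype.linearIndependent_iff]
  intro g hg i
  by_contra hgi
  have h := valuation_algebraMap_mul_pow_le_sum hcomp hw hm g i
  simp only [← Algebra.smul_def, hg, map_zero, le_zero_iff] at h
  obtain ⟨τ, hτ⟩ := exists_valuation_algebraMap_mul_pow hcomp hw hgi i
  rw [Algebra.smul_def, hτ] at h
  exact exp_ne_zero h

theorem le_finrank_of_valuation_surjective [FiniteDimensional K L]
    (hcomp : ∀ x : K, vL (algebraMap K L x) = vK x ^ e) (hsurj : Function.Surjective vL) :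
    e ≤ Module.finrank K L := by
  obtain ⟨y, hy⟩ := hsurj (exp (-1))
  simpa using (linearIndependent_pow_of_valuation_eq_exp hcomp hy
    isCoprime_one_right.neg_right).fintype_card_le_finrank

theorem resHom_surjective_of_finrank_eq (he : 0 < e)
    (hcomp : ∀ x : K, vL (algebraMap K L x) = vK x ^ e) (hw : vL w = exp m)
    (hm : IsCoprime (e : ℤ) m) (hfr : Module.finrank K L = e) :
    Function.Surjective (ResHom vK vL e he hcomp) := by
  have : NeZero e := ⟨he.ne'⟩
  have := VIntHom_isLocalHom vK vL e he hcomp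
  let B := basisOfLinearIndependentOfCardEqFinrank
    (linearIndependent_pow_of_valuation_eq_exp hcomp hw hm) (by rw [Fintype.card_fin, hfr])
  intro r
  obtain ⟨b, rfl⟩ := residue_surjective r
  set g := B.repr b
  have hb : (b : L) = ∑ i, algebraMap K L (g i) * w ^ (i : ℕ) := by
    conv_lhs => rw [← B.sum_repr b]
    simp [B, Algebra.smul_def, g]
  have hle : ∀ i, vL (algebraMap K L (g i) * w ^ (i : ℕ)) ≤ 1 := fun i =>
    (valuation_algebraMap_mul_pow_le_sum hcomp hw hm g i).trans (hb ▸ b.2)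
  have hg0 : vK (g 0) ≤ 1 := by
    simpa [hcomp, pow_le_one_iff_of_nonneg, he.ne'] using hle 0
  have hlt : ∀ i ∈ Finset.univ.erase 0, vL (algebraMap K L (g i) * w ^ (i : ℕ)) < 1 := by
    intro i hi
    rcases eq_or_ne (g i) 0 with hgi | hgi
    · simp [hgi]
    refine (hle i).lt_of_ne ?_
    simpa using valuation_algebraMap_mul_pow_ne hcomp hw hm i.2 he
      (Fin.val_ne_of_ne (Finset.ne_of_mem_erase hi)) hgi 1
  refine ⟨residue _ ⟨g 0, hg0⟩, ?_⟩
  rw [ResHom, ResidueField.map_residue, ← sub_eq_zero, ← map_sub, residue_eq_zero_iff,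
    Valuation.mem_maximalIdeal_iff]
  have hsub : ((VIntHom vK vL e hcomp ⟨g 0, hg0⟩ - b : vL.valuationSubring) : L) =
      -∑ i ∈ Finset.univ.erase 0, algebraMap K L (g i) * w ^ (i : ℕ) := by
    rw [← Finset.add_sum_erase _ _ (Finset.mem_univ 0)] at hb
    simp [VIntHom, hb]
  rw [hsub, Valuation.map_neg]
  exact vL.map_sum_lt one_ne_zero hlt

theorem valuation_sub_one_pow_eq_of_pow_eq {p eK n : ℕ} (hp : p.Prime) (he : 0 < e)
    (hcomp : ∀ x : K, vL (algebraMap K L x) = vK x ^ e) (heK : vK p = exp (-(eK : ℤ)))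
    (hn : 1 ≤ n) (hbound : n * (p - 1) < eK * p) {a : K} (ha1 : vK (a - 1) = exp (-(n : ℤ)))
    {α : L} (hα : α ^ p = algebraMap K L a) :
    vL (α - 1) ^ p = exp (-(n : ℤ)) ^ e := by
  have hα1 : vL α = 1 := by
    have hva : vK a = 1 := by
      simpa using vK.map_one_add_of_lt (x := a - 1) (by rw [ha1, ← exp_zero, exp_lt_exp]; omega)
    rw [← pow_eq_one_iff_of_nonneg zero_le hp.ne_zero, ← map_pow, hα, hcomp, hva, one_pow]
  have hxa : (α - 1 + 1) ^ p - 1 = algebraMap K L (a - 1) := by simp [hα]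
  have hlt : vL p ^ p < vL ((α - 1 + 1) ^ p - 1) ^ (p - 1) := by
    rw [hxa, hcomp, ha1, ← map_natCast (algebraMap K L), hcomp, heK]
    simp only [← exp_nsmul, exp_lt_exp, nsmul_eq_mul]
    zify [hp.one_le] at hbound ⊢
    nlinarith [mul_lt_mul_of_pos_left hbound (by exact_mod_cast he : (0 : ℤ) < e)]
  rw [vL.map_pow_eq_map_add_one_pow_sub_one hp (vL.map_sub_le hα1.le vL.map_one.le) hlt, hxa,
    hcomp, ha1]

end ValuationExtension

theorem finiteDimensional_and_finrank_le_of_pow_eq {p : ℕ} (hp : p ≠ 0) {α : L} {a : K}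
    (hα : α ^ p = algebraMap K L a) (hgen : IntermediateField.adjoin K {α} = ⊤) :
    FiniteDimensional K L ∧ Module.finrank K L ≤ p := by
  have hroot : Polynomial.aeval α (Polynomial.X ^ p - Polynomial.C a) = 0 := by simp [hα]
  have hint : IsIntegral K α := ⟨_, Polynomial.monic_X_pow_sub_C a hp, hroot⟩
  have hfd := IntermediateField.adjoin.finiteDimensional hint
  have hfr := IntermediateField.adjoin.finrank hint
  rw [hgen] at hfd hfr
  refine ⟨IntermediateField.topEquiv.toLinearEquiv.finiteDimensional, ?_⟩
  rw [← IntermediateField.finrank_top', hfr]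
  simpa using Polynomial.natDegree_le_of_dvd (minpoly.dvd K α hroot)
    (Polynomial.monic_X_pow_sub_C a hp).ne_zero

theorem kummer_ramified_unit_part_general
    (p : ℕ) (hp : p.Prime)
    (K : Type*) [Field K] (vK : Valuation K ℤₘ₀)
    (L : Type*) [Field L] [Algebra K L] (vL : Valuation L ℤₘ₀)
    (hsurjL : Function.Surjective vL)
    (e : ℕ) (he : 0 < e) (hcomp : ∀ x : K, vL (algebraMap K L x) = vK x ^ e)
    (π : K) (hπ : vK π = ((ofAdd (-1 : ℤ) : Multiplicative ℤ) : ℤₘ₀))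
    (eK : ℕ) (heK : vK (p : K) = ((ofAdd (-(eK : ℤ)) : Multiplicative ℤ) : ℤₘ₀))
    (n : ℕ) (hn : 1 ≤ n) (hpn : ¬ p ∣ n) (hbound : n * (p - 1) < eK * p)
    (u : vK.valuationSubring) (huunit : IsUnit u)
    (a : K)
    (ha : ∃ c : K, vK c ≤ 1 ∧ a = (1 + π ^ n * (u : K)) * (1 + π ^ (n + 1) * c))
    (α : L) (hα : α ^ p = algebraMap K L a)
    (hgen : IntermediateField.adjoin K {α} = ⊤) :
    e = p ∧ Function.Surjective (ResHom vK vL e he hcomp) := by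
  rw [← exp_eq_coe_ofAdd] at hπ heK
  obtain ⟨c, hc, ha⟩ := ha
  have hu : vK u = 1 :=
    (Valuation.valuationSubring.integers vK).isUnit_iff_valuation_eq_one.mp huunit
  have ha1 : vK (a - 1) = exp (-(n : ℤ)) := by
    have hπ1 : vK π < 1 := by rw [hπ, ← exp_zero, exp_lt_exp]; norm_num
    rw [vK.map_sub_one_of_eq_one_add_pow_mul hπ1 hu hc ha, hπ, ← exp_nsmul, nsmul_eq_mul,
      mul_neg_one]
  obtain ⟨hfd, hfr⟩ := finiteDimensional_and_finrank_le_of_pow_eq hp.ne_zero hα hgen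
  have hef := le_finrank_of_valuation_surjective hcomp hsurjL
  have hpn' : ¬ (p : ℤ) ∣ -(n : ℤ) := by rwa [Int.dvd_neg, Int.natCast_dvd_natCast]
  obtain ⟨hep, hx⟩ := eq_and_eq_exp_of_pow_eq_exp_pow hp hpn' he (hef.trans hfr)
    (valuation_sub_one_pow_eq_of_pow_eq hp he hcomp heK hn hbound ha1 hα)
  subst hep
  refine ⟨rfl, resHom_surjective_of_finrank_eq he hcomp hx ?_ (hfr.antisymm hef)⟩
  exact (Nat.isCoprime_iff_coprime.mpr (hp.coprime_iff_not_dvd.mpr hpn)).neg_right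

/-- Lemma 2.4 (4): Let `K` be a complete discrete valuation field of mixed characteristic
`(0, p)` containing a primitive `p`-th root of unity, with prime element `π` and
`e_K = ord_K p`, and let `L = K(α)` be the Kummer extension given by `α ^ p = a` with
`a ∈ (1 + π^n u)(1 + π^{n+1} 𝒪_K)`, where `p ∤ n`, `1 ≤ n < e_K p/(p-1)` and
`u ∈ 𝒪_K^×`.  Then `e(L/K) = p` and the residue field of `L` equals that of `K`. -/
theorem kummer_ramified_unit_part
    (p : ℕ) (hp : p.Prime)
    (K : Type*) [Field K] [CharZero K] (vK : Valuation K ℤₘ₀)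
    (hsurjK : Function.Surjective vK)
    (hcompl : IsAdicComplete (maximalIdeal vK.valuationSubring) vK.valuationSubring)
    (hres : CharP (ResidueField vK.valuationSubring) p)
    (ζ : K) (hζ : IsPrimitiveRoot ζ p)
    (L : Type*) [Field L] [Algebra K L] (vL : Valuation L ℤₘ₀)
    (hsurjL : Function.Surjective vL)
    (e : ℕ) (he : 0 < e) (hcomp : ∀ x : K, vL (algebraMap K L x) = vK x ^ e)
    (π : K) (hπ : vK π = ((ofAdd (-1 : ℤ) : Multiplicative ℤ) : ℤₘ₀))
    (eK : ℕ) (heK : vK (p : K) = ((ofAdd (-(eK : ℤ)) : Multiplicative ℤ) : ℤₘ₀))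
    (n : ℕ) (hn : 1 ≤ n) (hpn : ¬ p ∣ n) (hbound : n * (p - 1) < eK * p)
    (u : vK.valuationSubring) (huunit : IsUnit u)
    (a : K)
    (ha : ∃ c : K, vK c ≤ 1 ∧ a = (1 + π ^ n * (u : K)) * (1 + π ^ (n + 1) * c))
    (α : L) (hα : α ^ p = algebraMap K L a)
    (hgen : IntermediateField.adjoin K {α} = ⊤) :
    e = p ∧ Function.Surjective (ResHom vK vL e he hcomp) :=
  kummer_ramified_unit_part_general p hp K vK L vL hsurjL e he hcomp π hπ eK heK n hn hpn hbound u
    huunit a ha α hα hgen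
end
end

section
/- Let p be a prime number, let T be a finite nonempty set of positive integers, let r : T → ℤ_{≥0} be a function, and let m be an integer with m > r(n) for all n ∈ T. Assume that for every n ∈ T divisible by p one has r(n) = 0. Then there is a unique n ∈ T at which the quantity n·p^{m − r(n)} attains its maximum over T. -/
/-! The map `n ↦ n * p ^ (m - r n)` is injective on `T`: if `a` and `b` have the same value
and `r b < r a`, cancelling `p ^ (m - r a)` gives `a = b * p ^ (r a - r b)`, so `p ∣ a` and
hence `r a = 0`, which is absurd. An injective function has a unique maximiser on a finite
nonempty set. -/

theorem Finset.existsUnique_max_image_of_injOn {α β : Type*} [LinearOrder β] {s : Finset α}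
    {f : α → β} (hs : s.Nonempty) (hf : Set.InjOn f s) :
    ∃! x, x ∈ s ∧ ∀ y ∈ s, f y ≤ f x := by
  obtain ⟨x, hx, hmax⟩ := s.exists_max_image f hs
  refine ⟨x, ⟨hx, hmax⟩, ?_⟩
  rintro y ⟨hy, hymax⟩
  exact hf hy hx (le_antisymm (hmax y hy) (hymax x hx))

theorem Nat.eq_mul_pow_sub_of_mul_pow_sub_eq {p m a b i j : ℕ} (hp : 0 < p) (hi : i < m)
    (hji : j ≤ i) (h : a * p ^ (m - i) = b * p ^ (m - j)) : a = b * p ^ (i - j) := by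
  have hsplit : m - j = (i - j) + (m - i) := by omega
  rw [hsplit, pow_add, ← mul_assoc] at h
  exact Nat.eq_of_mul_eq_mul_right (pow_pos hp _) h

theorem injOn_mul_pow_sub {p m : ℕ} {r : ℕ → ℕ} {T : Set ℕ} (hp : 0 < p)
    (hm : ∀ n ∈ T, r n < m) (hr : ∀ n ∈ T, p ∣ n → r n = 0) :
    Set.InjOn (fun n => n * p ^ (m - r n)) T := by
  suffices key : ∀ a ∈ T, ∀ b ∈ T, r b ≤ r a →
      a * p ^ (m - r a) = b * p ^ (m - r b) → a = b by
    intro a ha b hb h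
    rcases le_total (r b) (r a) with hba | hab
    · exact key a ha b hb hba h
    · exact (key b hb a ha hab h.symm).symm
  intro a ha b hb hba h
  have hab := Nat.eq_mul_pow_sub_of_mul_pow_sub_eq hp (hm a ha) hba h
  rcases hba.eq_or_lt with heq | hlt
  · simpa [heq] using hab
  · have hpa : p ∣ a := hab ▸ dvd_mul_of_dvd_right (dvd_pow_self p (by omega)) b
    have := hr a ha hpa
    omega

theorem unique_max_of_mul_pow_general (p : ℕ) (hp : p.Prime) (T : Finset ℕ) (hT : T.Nonempty)
    (r : ℕ → ℕ) (m : ℕ) (hm : ∀ n ∈ T, r n < m)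
    (hr : ∀ n ∈ T, p ∣ n → r n = 0) :
    ∃! n, n ∈ T ∧ ∀ k ∈ T, k * p ^ (m - r k) ≤ n * p ^ (m - r n) :=
  T.existsUnique_max_image_of_injOn hT (injOn_mul_pow_sub hp.pos hm hr)

/-- Let `p` be a prime number, `T` a finite nonempty set of positive integers,
`r : T → ℤ≥0` a function, and `m` an integer with `m > r n` for all `n ∈ T`.
Assume that `r n = 0` for every `n ∈ T` divisible by `p`.  Then there is a unique
`n ∈ T` at which the quantity `n * p ^ (m - r n)` attains its maximum over `T`. -/
theorem unique_max_of_mul_pow (p : ℕ) (hp : p.Prime) (T : Finset ℕ) (hT : T.Nonempty)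
    (hTpos : ∀ n ∈ T, 0 < n) (r : ℕ → ℕ) (m : ℕ) (hm : ∀ n ∈ T, r n < m)
    (hr : ∀ n ∈ T, p ∣ n → r n = 0) :
    ∃! n, n ∈ T ∧ ∀ k ∈ T, k * p ^ (m - r k) ≤ n * p ^ (m - r n) :=
  unique_max_of_mul_pow_general p hp T hT r m hm hr
end
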